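/- (Convergence bound for CRAFT under full participation.) Let d, N ≥ 1, let f_1, …, f_N : ℝ^d → ℝ be L-smooth with ‖∇f_i(θ)‖ ≤ G_f for all i, θ; let ρ_1, …, ρ_N > 0 with Σ ρ_i = 1; set F = Σ ρ_i f_i, and assume F(θ) ≥ F⋆ for all θ. Fix η_l > 0, η_g > 0, local step counts K_i ≥ 1 with K_max = max_i K_i, ρ_min = min_i ρ_i, c = ρ_min/G_f. Consider a server trajectory θ_{t+1} = θ_t − η_g g_t, t = 0, …, T−1, where at each round the accumulated client updates g_i^t (from K_i local gradient-descent steps of rate η_l starting at θ_t) are all nonzero, the aggregate g_t satisfies the exact alignment constraints ⟨g_i^t/‖g_i^t‖, g_t⟩ = ρ_i for all i, and ‖g_t‖ ≤ G. Then for any T ≥ 1: (1/T) Σ_{t=0}^{T−1} ‖∇F(θ_t)‖² ≤ (F(θ_0) − F⋆)/(c η_g T) + L η_g G²/(2c) + (B_drift/c) η_l (K_max − 1), where B_drift = (L G_f / 2)(G + Σ_{i=1}^N ρ_i²). -/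

import Mathlib

open scoped InnerProductSpace BigOperators

noncomputable def traj {E : Type*} [NormedAddCommGroup E] [InnerProductSpace ℝ E]
    [CompleteSpace E] (f : E → ℝ) (ηl : ℝ) (θ : E) : ℕ → E
  | 0 => θ
  | k + 1 => traj f ηl θ k - ηl • gradient f (traj f ηl θ k)

/-!
By the alignment constraint, the rescaled client update `u_i = g_i / (η_l K_i)` satisfies
`⟪u_i, g⟫ = ρ_i ‖u_i‖`, and `u_i` is an average of gradients of `f_i` along the local iterates,
which drift from `θ` by at most `η_l G_f` per step; so `‖∇f_i(θ) - u_i‖ ≤ L η_l G_f (K_i - 1) / 2`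
and `⟪∇f_i(θ), g⟫ ≥ ρ_i ‖∇f_i(θ)‖` up to drift terms. Averaging with the weights `ρ_i ≥ ρ_min`
and using `‖∇F‖ ≤ G_f` gives `⟪∇F(θ_t), g_t⟫ ≥ c ‖∇F(θ_t)‖² - B_drift η_l (K_max - 1)`.
The server update is thus a biased gradient step, and the descent lemma for the `L`-smooth `F`
telescopes over the `T` rounds.
-/

theorem nonneg_of_norm_sub_le_mul_norm_sub {α β : Type*} [NormedAddCommGroup α] [Nontrivial α]
    [SeminormedAddCommGroup β] {φ : α → β} {L : ℝ} (hφ : ∀ x y, ‖φ x - φ y‖ ≤ L * ‖x - y‖) :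
    0 ≤ L := by
  obtain ⟨x, hx⟩ := exists_ne (0 : α)
  have h := (norm_nonneg _).trans (hφ x 0)
  rw [sub_zero] at h
  exact nonneg_of_mul_nonneg_left h (norm_pos_iff.mpr hx)

theorem div_mul_sq_le_mul {a x B : ℝ} (ha : 0 ≤ a) (hx : 0 ≤ x) (hxB : x ≤ B) :
    a / B * x ^ 2 ≤ a * x := by
  rcases (hx.trans hxB).eq_or_lt with rfl | hB
  · simp [mul_nonneg ha hx]
  · rw [div_mul_eq_mul_div, div_le_iff₀ hB]
    nlinarith [mul_le_mul_of_nonneg_left hxB (mul_nonneg ha hx)]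

theorem sum_range_natCast (K : ℕ) : ∑ k ∈ Finset.range K, (k : ℝ) = K * (K - 1) / 2 := by
  induction K with
  | zero => simp
  | succ K ih => rw [Finset.sum_range_succ, ih]; push_cast; ring

theorem sum_range_le_of_le_sub_succ {a u : ℕ → ℝ} {b m : ℝ} (h : ∀ t, a t ≤ u t - u (t + 1) + b)
    (hm : ∀ t, m ≤ u t) (T : ℕ) : ∑ t ∈ Finset.range T, a t ≤ u 0 - m + T * b :=
  calc ∑ t ∈ Finset.range T, a t ≤ ∑ t ∈ Finset.range T, (u t - u (t + 1) + b) :=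
        Finset.sum_le_sum fun t _ => h t
    _ = u 0 - u T + T * b := by
        rw [Finset.sum_add_distrib, Finset.sum_range_sub', Finset.sum_const, Finset.card_range,
          nsmul_eq_mul]
    _ ≤ u 0 - m + T * b := by linarith [hm T]

section Normed

variable {V : Type*} [SeminormedAddCommGroup V] [NormedSpace ℝ V] {ι : Type*} [Fintype ι]

theorem norm_sum_smul_le {ρ : ι → ℝ} (hρ : ∀ i, 0 ≤ ρ i) (v : ι → V) :
    ‖∑ i, ρ i • v i‖ ≤ ∑ i, ρ i * ‖v i‖ :=
  (norm_sum_le _ _).trans_eq <| Finset.sum_congr rfl fun i _ => by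
    rw [norm_smul, Real.norm_of_nonneg (hρ i)]

theorem norm_sum_smul_le_of_norm_le {ρ : ι → ℝ} {v : ι → V} {B : ℝ} (hρ : ∀ i, 0 ≤ ρ i)
    (hsum : ∑ i, ρ i = 1) (hv : ∀ i, ‖v i‖ ≤ B) : ‖∑ i, ρ i • v i‖ ≤ B :=
  calc ‖∑ i, ρ i • v i‖ ≤ ∑ i, ρ i * ‖v i‖ := norm_sum_smul_le hρ v
    _ ≤ ∑ i, ρ i * B := Finset.sum_le_sum fun i _ => mul_le_mul_of_nonneg_left (hv i) (hρ i)
    _ = B := by rw [← Finset.sum_mul, hsum, one_mul]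

end Normed

section Inner

variable {E : Type*} [NormedAddCommGroup E] [InnerProductSpace ℝ E]

theorem inner_smul_eq_mul_norm_smul {u g : E} {ρ : ℝ} (hu : u ≠ 0)
    (h : ⟪‖u‖⁻¹ • u, g⟫_ℝ = ρ) {r : ℝ} (hr : 0 ≤ r) : ⟪r • u, g⟫_ℝ = ρ * ‖r • u‖ := by
  rw [real_inner_smul_left] at h
  rw [real_inner_smul_left, norm_smul, Real.norm_of_nonneg hr, ← h]
  field_simp [norm_ne_zero_iff.mpr hu]

theorem inner_ge_of_inner_eq_mul_norm {a u g : E} {ρ D G : ℝ} (hρ : 0 ≤ ρ)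
    (hu : ⟪u, g⟫_ℝ = ρ * ‖u‖) (ha : ‖a - u‖ ≤ D) (hg : ‖g‖ ≤ G) :
    ρ * ‖a‖ - ρ * D - D * G ≤ ⟪a, g⟫_ℝ := by
  have herr : -(D * G) ≤ ⟪a - u, g⟫_ℝ :=
    (neg_le_neg ((abs_real_inner_le_norm _ _).trans
      (mul_le_mul ha hg (norm_nonneg _) ((norm_nonneg _).trans ha)))).trans (neg_abs_le _)
  have hnorm : ‖a‖ - D ≤ ‖u‖ := by linarith [norm_sub_norm_le a u]
  have hsplit : ⟪a, g⟫_ℝ = ⟪a - u, g⟫_ℝ + ρ * ‖u‖ := by rw [inner_sub_left, hu]; ring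
  nlinarith [mul_le_mul_of_nonneg_left hnorm hρ]

theorem mul_norm_sq_sub_le_inner_sum_smul {ι : Type*} [Fintype ι] {a : ι → E} {g : E}
    {ρ : ι → ℝ} {ρmin B D G : ℝ} (hρmin : 0 ≤ ρmin) (hρ : ∀ i, ρmin ≤ ρ i)
    (hB : ‖∑ i, ρ i • a i‖ ≤ B) (hsum : ∑ i, ρ i = 1)
    (ha : ∀ i, ρ i * ‖a i‖ - ρ i * D - D * G ≤ ⟪a i, g⟫_ℝ) :
    ρmin / B * ‖∑ i, ρ i • a i‖ ^ 2 - D * (G + ∑ i, ρ i ^ 2) ≤ ⟪∑ i, ρ i • a i, g⟫_ℝ := by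
  have hρ0 i : 0 ≤ ρ i := hρmin.trans (hρ i)
  have hquad := div_mul_sq_le_mul hρmin (norm_nonneg _) hB
  have hnorm := mul_le_mul_of_nonneg_left (norm_sum_smul_le hρ0 a) hρmin
  have hmin : ρmin * ∑ i, ρ i * ‖a i‖ ≤ ∑ i, ρ i ^ 2 * ‖a i‖ := by
    rw [Finset.mul_sum]
    refine Finset.sum_le_sum fun i _ => ?_
    nlinarith [mul_le_mul_of_nonneg_right (hρ i) (mul_nonneg (hρ0 i) (norm_nonneg (a i)))]
  have hinner : ∑ i, ρ i * (ρ i * ‖a i‖ - ρ i * D - D * G) ≤ ⟪∑ i, ρ i • a i, g⟫_ℝ := by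
    simp only [sum_inner, real_inner_smul_left]
    exact Finset.sum_le_sum fun i _ => mul_le_mul_of_nonneg_left (ha i) (hρ0 i)
  have hexpand : ∑ i, ρ i * (ρ i * ‖a i‖ - ρ i * D - D * G)
      = ∑ i, ρ i ^ 2 * ‖a i‖ - D * (G + ∑ i, ρ i ^ 2) := by
    have hterm i : ρ i * (ρ i * ‖a i‖ - ρ i * D - D * G)
        = ρ i ^ 2 * ‖a i‖ - D * ρ i ^ 2 - D * G * ρ i := by ring
    simp only [hterm, Finset.sum_sub_distrib, ← Finset.mul_sum, hsum]
    ring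
  linarith

end Inner

section Smooth

variable {E : Type*} [NormedAddCommGroup E] [InnerProductSpace ℝ E] [CompleteSpace E]

theorem hasDerivAt_comp_add_smul {F : E → ℝ} {x : E} (v : E) {t : ℝ}
    (hF : DifferentiableAt ℝ F (x + t • v)) :
    HasDerivAt (fun s : ℝ => F (x + s • v)) ⟪gradient F (x + t • v), v⟫_ℝ t := by
  have hline : HasDerivAt (fun s : ℝ => x + s • v) v t := by
    simpa using ((hasDerivAt_id t).smul_const v).const_add x
  exact hF.hasGradientAt.hasFDerivAt.comp_hasDerivAt t hline

theorem le_add_inner_gradient_add_sq {F : E → ℝ} {L : ℝ} (hF : Differentiable ℝ F)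
    (hLip : ∀ x y, ‖gradient F x - gradient F y‖ ≤ L * ‖x - y‖) (x y : E) :
    F y ≤ F x + ⟪gradient F x, y - x⟫_ℝ + L / 2 * ‖y - x‖ ^ 2 := by
  set v := y - x
  let φ : ℝ → ℝ := fun t => F (x + t • v) - t * ⟪gradient F x, v⟫_ℝ - L / 2 * t ^ 2 * ‖v‖ ^ 2
  have hφ t : HasDerivAt φ (⟪gradient F (x + t • v) - gradient F x, v⟫_ℝ - L * t * ‖v‖ ^ 2) t := by
    refine (((hasDerivAt_comp_add_smul v (hF _)).sub
      ((hasDerivAt_id' t).mul_const ⟪gradient F x, v⟫_ℝ)).sub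
      (((hasDerivAt_pow 2 t).const_mul (L / 2)).mul_const (‖v‖ ^ 2))).congr_deriv ?_
    rw [inner_sub_left]
    ring
  have hanti : AntitoneOn φ (Set.Icc 0 1) := by
    refine antitoneOn_of_deriv_nonpos (convex_Icc 0 1)
      (fun t _ => (hφ t).continuousAt.continuousWithinAt)
      (fun t _ => (hφ t).differentiableAt.differentiableWithinAt) fun t ht => ?_
    rw [interior_Icc] at ht
    rw [(hφ t).deriv, sub_nonpos]
    calc ⟪gradient F (x + t • v) - gradient F x, v⟫_ℝ
        ≤ ‖gradient F (x + t • v) - gradient F x‖ * ‖v‖ := real_inner_le_norm _ _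
      _ ≤ L * ‖t • v‖ * ‖v‖ :=
          mul_le_mul_of_nonneg_right (by simpa using hLip (x + t • v) x) (norm_nonneg v)
      _ = L * t * ‖v‖ ^ 2 := by rw [norm_smul, Real.norm_of_nonneg ht.1.le]; ring
  have h01 : φ 1 ≤ φ 0 := hanti (by simp) (by simp) zero_le_one
  have hφ0 : φ 0 = F x := by simp [φ]
  have hφ1 : φ 1 = F y - ⟪gradient F x, v⟫_ℝ - L / 2 * ‖v‖ ^ 2 := by simp [φ, v]
  linarith

theorem hasGradientAt_sum_mul {ι : Type*} [Fintype ι] {f : ι → E → ℝ} (ρ : ι → ℝ) {x : E}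
    (hf : ∀ i, DifferentiableAt ℝ (f i) x) :
    HasGradientAt (fun y => ∑ i, ρ i * f i y) (∑ i, ρ i • gradient (f i) x) x := by
  rw [hasGradientAt_iff_hasFDerivAt, map_sum]
  simp only [map_smul]
  exact HasFDerivAt.fun_sum fun i _ => (hf i).hasGradientAt.hasFDerivAt.const_mul (ρ i)

theorem descent_step {F : E → ℝ} {L c β G η : ℝ} (hF : Differentiable ℝ F)
    (hLip : ∀ x y, ‖gradient F x - gradient F y‖ ≤ L * ‖x - y‖) (hL : 0 ≤ L) (hη : 0 ≤ η)
    {θ g : E} (hg : ‖g‖ ≤ G) (hinner : c * ‖gradient F θ‖ ^ 2 - β ≤ ⟪gradient F θ, g⟫_ℝ) :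
    c * η * ‖gradient F θ‖ ^ 2 ≤ F θ - F (θ - η • g) + (η * β + L / 2 * η ^ 2 * G ^ 2) := by
  have h := le_add_inner_gradient_add_sq hF hLip θ (θ - η • g)
  rw [sub_sub_cancel_left, inner_neg_right, real_inner_smul_right, norm_neg, norm_smul,
    Real.norm_of_nonneg hη] at h
  have hgG : ‖g‖ ^ 2 ≤ G ^ 2 := pow_le_pow_left₀ (norm_nonneg g) hg 2
  nlinarith [mul_le_mul_of_nonneg_left hinner hη,
    mul_le_mul_of_nonneg_left hgG (by positivity : 0 ≤ L / 2 * η ^ 2)]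

theorem avg_sq_norm_gradient_le_of_inner_ge {F : E → ℝ} {L c β G η Fstar : ℝ}
    (hF : Differentiable ℝ F) (hLip : ∀ x y, ‖gradient F x - gradient F y‖ ≤ L * ‖x - y‖)
    (hL : 0 ≤ L) (hFstar : ∀ x, Fstar ≤ F x) (hc : 0 < c) (hη : 0 < η) {θ g : ℕ → E}
    (hstep : ∀ t, θ (t + 1) = θ t - η • g t) (hG : ∀ t, ‖g t‖ ≤ G)
    (hinner : ∀ t, c * ‖gradient F (θ t)‖ ^ 2 - β ≤ ⟪gradient F (θ t), g t⟫_ℝ)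
    {T : ℕ} (hT : 0 < T) :
    1 / (T : ℝ) * ∑ t ∈ Finset.range T, ‖gradient F (θ t)‖ ^ 2 ≤
      (F (θ 0) - Fstar) / (c * η * T) + L * η * G ^ 2 / (2 * c) + β / c := by
  have hsum := sum_range_le_of_le_sub_succ (u := fun t => F (θ t))
    (fun t => hstep t ▸ descent_step hF hLip hL hη.le (hG t) (hinner t)) (fun t => hFstar _) T
  rw [← Finset.mul_sum] at hsum
  have hT' : (0 : ℝ) < T := by exact_mod_cast hT
  calc 1 / (T : ℝ) * ∑ t ∈ Finset.range T, ‖gradient F (θ t)‖ ^ 2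
      = (c * η * ∑ t ∈ Finset.range T, ‖gradient F (θ t)‖ ^ 2) / (c * η * T) := by
        field_simp
    _ ≤ (F (θ 0) - Fstar + T * (η * β + L / 2 * η ^ 2 * G ^ 2)) / (c * η * T) := by
        gcongr
    _ = (F (θ 0) - Fstar) / (c * η * T) + L * η * G ^ 2 / (2 * c) + β / c := by
        field_simp
        ring

noncomputable def localUpdate (f : E → ℝ) (η : ℝ) (θ : E) (K : ℕ) : E :=
  η • ∑ k ∈ Finset.range K, gradient f (traj f η θ k)

section LocalSteps

variable {f : E → ℝ} {L Gf η : ℝ}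

theorem norm_traj_sub_le (hη : 0 ≤ η) (hGf : ∀ x, ‖gradient f x‖ ≤ Gf) (θ : E) (k : ℕ) :
    ‖traj f η θ k - θ‖ ≤ η * k * Gf := by
  induction k with
  | zero => simp [traj]
  | succ k ih =>
    calc ‖traj f η θ (k + 1) - θ‖ = ‖(traj f η θ k - θ) - η • gradient f (traj f η θ k)‖ := by
          rw [traj, sub_right_comm]
      _ ≤ η * k * Gf + η * Gf := by
          refine (norm_sub_le _ _).trans (add_le_add ih ?_)
          rw [norm_smul, Real.norm_of_nonneg hη]
          exact mul_le_mul_of_nonneg_left (hGf _) hη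
      _ = η * (k + 1 : ℕ) * Gf := by push_cast; ring

theorem norm_localUpdate_le (hη : 0 ≤ η) (hGf : ∀ x, ‖gradient f x‖ ≤ Gf) (θ : E) (K : ℕ) :
    ‖localUpdate f η θ K‖ ≤ η * K * Gf := by
  rw [localUpdate, norm_smul, Real.norm_of_nonneg hη, mul_assoc]
  refine mul_le_mul_of_nonneg_left ((norm_sum_le _ _).trans ?_) hη
  simpa using Finset.sum_le_sum fun k (_ : k ∈ Finset.range K) => hGf (traj f η θ k)

theorem norm_gradient_sub_smul_localUpdate_le (hL : 0 ≤ L)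
    (hLip : ∀ x y, ‖gradient f x - gradient f y‖ ≤ L * ‖x - y‖)
    (hGf : ∀ x, ‖gradient f x‖ ≤ Gf) (hη : 0 < η) {K : ℕ} (hK : 0 < K) (θ : E) :
    ‖gradient f θ - (η * K)⁻¹ • localUpdate f η θ K‖ ≤ L * η * Gf * (K - 1) / 2 := by
  have hK' : (0 : ℝ) < K := by exact_mod_cast hK
  have havg : gradient f θ - (η * K)⁻¹ • localUpdate f η θ K
      = (K : ℝ)⁻¹ • ∑ k ∈ Finset.range K, (gradient f θ - gradient f (traj f η θ k)) := by
    rw [localUpdate, smul_smul, Finset.sum_sub_distrib, Finset.sum_const, Finset.card_range,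
      smul_sub, ← Nat.cast_smul_eq_nsmul ℝ, smul_smul, inv_mul_cancel₀ hK'.ne', one_smul,
      mul_inv_rev, mul_assoc, inv_mul_cancel₀ hη.ne', mul_one]
  calc ‖gradient f θ - (η * K)⁻¹ • localUpdate f η θ K‖
      ≤ (K : ℝ)⁻¹ * ∑ k ∈ Finset.range K, L * (η * k * Gf) := by
        rw [havg, norm_smul, Real.norm_of_nonneg (by positivity)]
        refine mul_le_mul_of_nonneg_left ((norm_sum_le _ _).trans
          (Finset.sum_le_sum fun k _ => (hLip _ _).trans ?_)) (by positivity)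
        rw [norm_sub_rev]
        exact mul_le_mul_of_nonneg_left (norm_traj_sub_le hη.le hGf θ k) hL
    _ = L * η * Gf * (K - 1) / 2 := by
        simp only [← mul_assoc, ← Finset.sum_mul, ← Finset.mul_sum, sum_range_natCast]
        field_simp

theorem inner_gradient_ge_of_localUpdate_aligned (hL : 0 ≤ L)
    (hLip : ∀ x y, ‖gradient f x - gradient f y‖ ≤ L * ‖x - y‖)
    (hGf : ∀ x, ‖gradient f x‖ ≤ Gf) (hη : 0 < η) {K : ℕ} (hK : 0 < K) {θ g : E} {ρ D G : ℝ}
    (hne : localUpdate f η θ K ≠ 0)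
    (halign : ⟪‖localUpdate f η θ K‖⁻¹ • localUpdate f η θ K, g⟫_ℝ = ρ) (hρ : 0 ≤ ρ)
    (hg : ‖g‖ ≤ G) (hD : L * η * Gf * (K - 1) / 2 ≤ D) :
    ρ * ‖gradient f θ‖ - ρ * D - D * G ≤ ⟪gradient f θ, g⟫_ℝ :=
  inner_ge_of_inner_eq_mul_norm hρ (inner_smul_eq_mul_norm_smul hne halign (by positivity))
    ((norm_gradient_sub_smul_localUpdate_le hL hLip hGf hη hK θ).trans hD) hg

end LocalSteps

end Smooth

theorem craft_convergence_bound_general {d N : ℕ} (hd : 1 ≤ d)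
    (f : Fin N → EuclideanSpace ℝ (Fin d) → ℝ) (L Gf : ℝ)
    (hdiff : ∀ i, Differentiable ℝ (f i))
    (hLip : ∀ i x y, ‖gradient (f i) x - gradient (f i) y‖ ≤ L * ‖x - y‖)
    (hGf : ∀ i x, ‖gradient (f i) x‖ ≤ Gf)
    (ρ : Fin N → ℝ) (hρpos : ∀ i, 0 < ρ i) (hρsum : ∑ i, ρ i = 1)
    (F : EuclideanSpace ℝ (Fin d) → ℝ) (hF : F = fun x => ∑ i, ρ i * f i x)
    (Fstar : ℝ) (hFstar : ∀ x, Fstar ≤ F x)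
    (ρmin : ℝ) (hρminlb : ∀ i, ρmin ≤ ρ i) (hρminmem : ∃ i, ρ i = ρmin)
    (c : ℝ) (hc : c = ρmin / Gf)
    (ηl ηg : ℝ) (hηl : 0 < ηl) (hηg : 0 < ηg)
    (K : Fin N → ℕ) (hK : ∀ i, 1 ≤ K i)
    (Kmax : ℕ) (hKmaxub : ∀ i, K i ≤ Kmax)
    (θt : ℕ → EuclideanSpace ℝ (Fin d)) (g : ℕ → EuclideanSpace ℝ (Fin d))
    (hstep : ∀ t, θt (t + 1) = θt t - ηg • g t)
    (gI : ℕ → Fin N → EuclideanSpace ℝ (Fin d))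
    (hgI : ∀ t i, gI t i = ηl • ∑ k ∈ Finset.range (K i),
        gradient (f i) (traj (f i) ηl (θt t) k))
    (hne : ∀ t i, gI t i ≠ 0)
    (halign : ∀ t i, ⟪‖gI t i‖⁻¹ • gI t i, g t⟫_ℝ = ρ i)
    (G : ℝ) (hG : ∀ t, ‖g t‖ ≤ G)
    (Bdrift : ℝ) (hB : Bdrift = L * Gf / 2 * (G + ∑ i, (ρ i) ^ 2))
    (T : ℕ) (hT : 1 ≤ T) :
    (1 / (T : ℝ)) * ∑ t ∈ Finset.range T, ‖gradient F (θt t)‖ ^ 2 ≤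
      (F (θt 0) - Fstar) / (c * ηg * T) + L * ηg * G ^ 2 / (2 * c)
      + Bdrift / c * (ηl * ((Kmax : ℝ) - 1)) := by
  obtain ⟨imin, rfl⟩ := hρminmem
  have hρ i : 0 ≤ ρ i := (hρpos i).le
  have hloc t i : gI t i = localUpdate (f i) ηl (θt t) (K i) := hgI t i
  simp only [hloc] at hne halign
  have hGf0 : 0 < Gf := pos_of_mul_pos_right ((norm_pos_iff.mpr (hne 0 imin)).trans_le
    (norm_localUpdate_le hηl.le (hGf imin) _ _)) (by positivity)
  have hL : 0 ≤ L :=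
    have : Nonempty (Fin d) := ⟨⟨0, hd⟩⟩
    nonneg_of_norm_sub_le_mul_norm_sub (hLip imin)
  have hgradF x : HasGradientAt F (∑ i, ρ i • gradient (f i) x) x :=
    hF ▸ hasGradientAt_sum_mul ρ fun i => hdiff i x
  have hFLip x y : ‖gradient F x - gradient F y‖ ≤ L * ‖x - y‖ := by
    simp only [(hgradF _).gradient, ← Finset.sum_sub_distrib, ← smul_sub]
    exact norm_sum_smul_le_of_norm_le hρ hρsum fun i => hLip i x y
  set D := L * ηl * Gf * ((Kmax : ℝ) - 1) / 2
  have hinner t : c * ‖gradient F (θt t)‖ ^ 2 - Bdrift * (ηl * ((Kmax : ℝ) - 1))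
      ≤ ⟪gradient F (θt t), g t⟫_ℝ := by
    rw [show Bdrift * (ηl * ((Kmax : ℝ) - 1)) = D * (G + ∑ i, ρ i ^ 2) by rw [hB]; ring,
      (hgradF _).gradient, hc]
    refine mul_norm_sq_sub_le_inner_sum_smul (hρ imin) hρminlb
      (norm_sum_smul_le_of_norm_le hρ hρsum fun i => hGf i _) hρsum fun i => ?_
    refine inner_gradient_ge_of_localUpdate_aligned hL (hLip i) (hGf i) hηl (hK i) (hne t i)
      (halign t i) (hρ i) (hG t) ?_
    unfold D
    gcongr
    exact_mod_cast hKmaxub i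
  rw [div_mul_eq_mul_div Bdrift]
  exact avg_sq_norm_gradient_le_of_inner_ge (fun x => (hgradF x).differentiableAt) hFLip hL
    hFstar (hc ▸ div_pos (hρpos imin) hGf0) hηg hstep hG hinner hT

/-- **Convergence bound for CRAFT under full participation.**
For a server trajectory `θ_{t+1} = θ_t − η_g g_t` whose aggregates satisfy the exact
alignment constraints with the (nonzero) accumulated client updates and `‖g_t‖ ≤ G`,
`(1/T) Σ_{t<T} ‖∇F(θ_t)‖² ≤ (F(θ₀)−F⋆)/(c η_g T) + L η_g G²/(2c)
  + (B_drift/c) η_l (K_max − 1)`. -/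
theorem craft_convergence_bound {d N : ℕ} (hd : 1 ≤ d) (hN : 1 ≤ N)
    (f : Fin N → EuclideanSpace ℝ (Fin d) → ℝ) (L Gf : ℝ)
    (hdiff : ∀ i, Differentiable ℝ (f i))
    (hLip : ∀ i x y, ‖gradient (f i) x - gradient (f i) y‖ ≤ L * ‖x - y‖)
    (hGf : ∀ i x, ‖gradient (f i) x‖ ≤ Gf)
    (ρ : Fin N → ℝ) (hρpos : ∀ i, 0 < ρ i) (hρsum : ∑ i, ρ i = 1)
    (F : EuclideanSpace ℝ (Fin d) → ℝ) (hF : F = fun x => ∑ i, ρ i * f i x)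
    (Fstar : ℝ) (hFstar : ∀ x, Fstar ≤ F x)
    (ρmin : ℝ) (hρminlb : ∀ i, ρmin ≤ ρ i) (hρminmem : ∃ i, ρ i = ρmin)
    (c : ℝ) (hc : c = ρmin / Gf)
    (ηl ηg : ℝ) (hηl : 0 < ηl) (hηg : 0 < ηg)
    (K : Fin N → ℕ) (hK : ∀ i, 1 ≤ K i)
    (Kmax : ℕ) (hKmaxub : ∀ i, K i ≤ Kmax) (hKmaxmem : ∃ i, K i = Kmax)
    (θt : ℕ → EuclideanSpace ℝ (Fin d)) (g : ℕ → EuclideanSpace ℝ (Fin d))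
    (hstep : ∀ t, θt (t + 1) = θt t - ηg • g t)
    (gI : ℕ → Fin N → EuclideanSpace ℝ (Fin d))
    (hgI : ∀ t i, gI t i = ηl • ∑ k ∈ Finset.range (K i),
        gradient (f i) (traj (f i) ηl (θt t) k))
    (hne : ∀ t i, gI t i ≠ 0)
    (halign : ∀ t i, ⟪‖gI t i‖⁻¹ • gI t i, g t⟫_ℝ = ρ i)
    (G : ℝ) (hG : ∀ t, ‖g t‖ ≤ G)
    (Bdrift : ℝ) (hB : Bdrift = L * Gf / 2 * (G + ∑ i, (ρ i) ^ 2))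
    (T : ℕ) (hT : 1 ≤ T) :
    (1 / (T : ℝ)) * ∑ t ∈ Finset.range T, ‖gradient F (θt t)‖ ^ 2 ≤
      (F (θt 0) - Fstar) / (c * ηg * T) + L * ηg * G ^ 2 / (2 * c)
      + Bdrift / c * (ηl * ((Kmax : ℝ) - 1)) :=
  craft_convergence_bound_general hd f L Gf hdiff hLip hGf ρ hρpos hρsum F hF Fstar hFstar ρmin
    hρminlb hρminmem c hc ηl ηg hηl hηg K hK Kmax hKmaxub θt g hstep gI hgI hne halign G hG Bdrift
    hB T hT
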